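/- arXiv:1604.07779 — 10 statements merged into one kernel-verified Lean document; each statement's English description precedes it below -/
import Mathlib

section
/- Let κ ∈ ℝ and let (u, h, h1) be a smooth solution on ℝ² of the generalized Burgers −1 flow system such that u_x(t,x) ≠ 0 for all (t,x) ∈ ℝ². Then u satisfies the generalized Burgers −1 flow equation u_{txx} = (κ − (1/2)u + u_{xx}/u_x) u_{tx} − (u_x + (u_{xx}/u_x)(κ − (1/2)u)) u_t at every point of ℝ². -/
/-- Partial derivative with respect to the first (time) variable. -/
noncomputable def pt (u : ℝ → ℝ → ℝ) : ℝ → ℝ → ℝ := fun t x => deriv (fun s => u s x) t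

/-- Partial derivative with respect to the second (space) variable. -/
noncomputable def px (u : ℝ → ℝ → ℝ) : ℝ → ℝ → ℝ := fun t x => deriv (fun y => u t y) x

/-- Smoothness of a function of two real variables. -/
def Smooth2 (u : ℝ → ℝ → ℝ) : Prop := ContDiff ℝ (⊤ : ℕ∞) (fun p : ℝ × ℝ => u p.1 p.2)

/-- Generalized Burgers −1 flow: the system implies the single non-evolutionary equation. -/
theorem burgers_gen_neg1_flow
    (κ : ℝ) (u h h1 : ℝ → ℝ → ℝ)
    (hu : Smooth2 u) (hh : Smooth2 h) (hh1 : Smooth2 h1)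
    (hux : ∀ t x, px u t x ≠ 0)
    (sys1 : ∀ t x, pt u t x = h t x)
    (sys2 : ∀ t x, px h t x + (1/2) * u t x * h t x + (1/2) * px u t x * h1 t x = κ * h t x)
    (sys3 : ∀ t x, px h1 t x = h t x) :
    ∀ t x, px (px (pt u)) t x =
      (κ - (1/2) * u t x + px (px u) t x / px u t x) * px (pt u) t x
      - (px u t x + (px (px u) t x / px u t x) * (κ - (1/2) * u t x)) * pt u t x := by
  intro t x
  have slice : ∀ (v : ℝ → ℝ → ℝ), Smooth2 v → ContDiff ℝ (⊤ : ℕ∞) (fun y => v t y) := by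
    intro v hv
    exact hv.comp (contDiff_const.prodMk contDiff_id)
  set U : ℝ → ℝ := fun y => u t y with hUdef
  set F : ℝ → ℝ := fun y => h t y with hFdef
  set H1 : ℝ → ℝ := fun y => h1 t y with hH1def
  have cU : ContDiff ℝ (⊤ : ℕ∞) U := slice u hu
  have cF : ContDiff ℝ (⊤ : ℕ∞) F := slice h hh
  have cH1 : ContDiff ℝ (⊤ : ℕ∞) H1 := slice h1 hh1
  have cU' : ContDiff ℝ (⊤ : ℕ∞) (deriv U) := (contDiff_infty_iff_deriv.mp (cU.of_le (by simp))).2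
  have cF' : ContDiff ℝ (⊤ : ℕ∞) (deriv F) := (contDiff_infty_iff_deriv.mp (cF.of_le (by simp))).2
  -- pointwise slices of the system
  have eq2 : ∀ y, deriv F y + (1/2) * U y * F y + (1/2) * deriv U y * H1 y = κ * F y :=
    fun y => sys2 t y
  have eq3 : ∀ y, deriv H1 y = F y := fun y => sys3 t y
  -- rewrite goal derivatives in terms of F, U
  have hpt : (fun y => pt u t y) = F := funext fun y => sys1 t y
  have hpxpt : px (pt u) t = deriv F := by
    funext y
    show deriv (fun z => pt u t z) y = deriv F y
    rw [hpt]
  have goal1 : px (px (pt u)) t x = deriv (deriv F) x := by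
    show deriv (fun y => px (pt u) t y) x = deriv (deriv F) x
    rw [show (fun y => px (pt u) t y) = deriv F from funext fun y => congrFun hpxpt y]
  have goal2 : px (pt u) t x = deriv F x := congrFun hpxpt x
  have goal3 : pt u t x = F x := sys1 t x
  have goalU : px u t x = deriv U x := rfl
  have goalUU : px (px u) t x = deriv (deriv U) x := rfl
  -- differentiate eq2 at x
  have dU : HasDerivAt U (deriv U x) x := ((cU.differentiable (by simp)) x).hasDerivAt
  have dF : HasDerivAt F (deriv F x) x := ((cF.differentiable (by simp)) x).hasDerivAt
  have dH1 : HasDerivAt H1 (deriv H1 x) x := ((cH1.differentiable (by simp)) x).hasDerivAt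
  have dU' : HasDerivAt (deriv U) (deriv (deriv U) x) x :=
    ((cU'.differentiable (by simp)) x).hasDerivAt
  have dF' : HasDerivAt (deriv F) (deriv (deriv F) x) x :=
    ((cF'.differentiable (by simp)) x).hasDerivAt
  have HL : HasDerivAt (fun y => deriv F y + (1/2) * U y * F y + (1/2) * deriv U y * H1 y)
      (deriv (deriv F) x + ((1/2) * deriv U x * F x + (1/2) * U x * deriv F x)
        + ((1/2) * deriv (deriv U) x * H1 x + (1/2) * deriv U x * deriv H1 x)) x :=
    (dF'.add ((dU.const_mul (1/2)).mul dF)).add ((dU'.const_mul (1/2)).mul dH1)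
  have HR : HasDerivAt (fun y => κ * F y) (κ * deriv F x) x := dF.const_mul κ
  have HL' : HasDerivAt (fun y => κ * F y)
      (deriv (deriv F) x + ((1/2) * deriv U x * F x + (1/2) * U x * deriv F x)
        + ((1/2) * deriv (deriv U) x * H1 x + (1/2) * deriv U x * deriv H1 x)) x := by
    have : (fun y => deriv F y + (1/2) * U y * F y + (1/2) * deriv U y * H1 y)
        = fun y => κ * F y := funext eq2
    rwa [this] at HL
  have E1 : deriv (deriv F) x + ((1/2) * deriv U x * F x + (1/2) * U x * deriv F x)
        + ((1/2) * deriv (deriv U) x * H1 x + (1/2) * deriv U x * F x) = κ * deriv F x := by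
    have := HL'.unique HR
    rw [eq3 x] at this
    linarith [this]
  have E2 : deriv F x + (1/2) * U x * F x + (1/2) * deriv U x * H1 x = κ * F x := eq2 x
  have hQ : deriv U x ≠ 0 := hux t x
  have key : deriv (deriv F) x * deriv U x =
      (κ * deriv U x - (1/2) * U x * deriv U x + deriv (deriv U) x) * deriv F x
      - (deriv U x ^ 2 + deriv (deriv U) x * (κ - (1/2) * U x)) * F x := by
    linear_combination (deriv U x) * E1 - (deriv (deriv U) x) * E2
  rw [goal1, goal2, goal3, goalU, goalUU]
  rw [← sub_eq_zero]
  have expand : deriv (deriv F) x -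
      ((κ - 1 / 2 * U x + deriv (deriv U) x / deriv U x) * deriv F x -
        (deriv U x + deriv (deriv U) x / deriv U x * (κ - 1 / 2 * U x)) * F x)
      = (deriv (deriv F) x * deriv U x -
          ((κ * deriv U x - (1/2) * U x * deriv U x + deriv (deriv U) x) * deriv F x
          - (deriv U x ^ 2 + deriv (deriv U) x * (κ - (1/2) * U x)) * F x)) / deriv U x := by
    field_simp
  rw [expand, key, sub_self, zero_div]
end

section
/- Let κ, c̃ ∈ ℝ and let (u, h, h1) be a smooth solution on ℝ² of the generalized Burgers −1 flow system such that h + (1/2)u·h1 − κ·h1 = c̃ holds identically on ℝ². Then u satisfies the once-integrated generalized Burgers −1 flow equation (u − 2κ)·u_{tx} = −(1/2)(u − 2κ)²·u_t + u_x·(u_t − c̃) at every point of ℝ². -/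
/-- Once-integrated generalized Burgers −1 flow equation. -/
theorem burgers_gen_neg1_integrated
    (κ c : ℝ) (u h h1 : ℝ → ℝ → ℝ)
    (hu : Smooth2 u) (hh : Smooth2 h) (hh1 : Smooth2 h1)
    (sys1 : ∀ t x, pt u t x = h t x)
    (sys2 : ∀ t x, px h t x + (1/2) * u t x * h t x + (1/2) * px u t x * h1 t x = κ * h t x)
    (sys3 : ∀ t x, px h1 t x = h t x)
    (hfi : ∀ t x, h t x + (1/2) * u t x * h1 t x - κ * h1 t x = c) :
    ∀ t x, (u t x - 2*κ) * px (pt u) t x =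
      -(1/2) * (u t x - 2*κ)^2 * pt u t x + px u t x * (pt u t x - c) := by
  intro t x
  have hpx : px (pt u) t x = px h t x := by
    unfold px
    congr 1
    funext y
    exact sys1 t y
  rw [hpx, sys1 t x]
  have h2 := sys2 t x
  have h3 := hfi t x
  linear_combination (u t x - 2*κ) * h2 - px u t x * h3
end

section
/- Let κ, c̃ ∈ ℝ and let v : ℝ² → ℝ be a smooth nowhere-vanishing function satisfying the linear equation v_{tx} − κ·v_t = (1/2)c̃·v on ℝ². Define u = 2·v_x/v (the Cole–Hopf transformation). Then u satisfies the once-integrated generalized Burgers −1 flow equation (u − 2κ)·u_{tx} = −(1/2)(u − 2κ)²·u_t + u_x·(u_t − c̃) at every point of ℝ². -/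
lemma aux1 {v : ℝ → ℝ → ℝ} (hv : Smooth2 v) (t x : ℝ) :
    HasDerivAt (fun s => v s x) (fderiv ℝ (fun p : ℝ × ℝ => v p.1 p.2) (t, x) (1, 0)) t := by
  have hF := ((hv.differentiable (by simp)) (t, x)).hasFDerivAt
  exact hF.comp_hasDerivAt t (HasDerivAt.prodMk (hasDerivAt_id t) (hasDerivAt_const t x))

lemma aux2 {v : ℝ → ℝ → ℝ} (hv : Smooth2 v) (t x : ℝ) :
    HasDerivAt (fun y => v t y) (fderiv ℝ (fun p : ℝ × ℝ => v p.1 p.2) (t, x) (0, 1)) x := by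
  have hF := ((hv.differentiable (by simp)) (t, x)).hasFDerivAt
  exact hF.comp_hasDerivAt x (HasDerivAt.prodMk (hasDerivAt_const x t) (hasDerivAt_id x))

lemma hasDerivAt_pt {v : ℝ → ℝ → ℝ} (hv : Smooth2 v) (t x : ℝ) :
    HasDerivAt (fun s => v s x) (pt v t x) t := by
  have h := aux1 hv t x
  unfold pt; rw [h.deriv]; exact h

lemma hasDerivAt_px {v : ℝ → ℝ → ℝ} (hv : Smooth2 v) (t x : ℝ) :
    HasDerivAt (fun y => v t y) (px v t x) x := by
  have h := aux2 hv t x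
  unfold px; rw [h.deriv]; exact h

lemma smooth2_pt {v : ℝ → ℝ → ℝ} (hv : Smooth2 v) : Smooth2 (pt v) := by
  have he : (fun p : ℝ × ℝ => pt v p.1 p.2)
      = fun p : ℝ × ℝ => fderiv ℝ (fun p : ℝ × ℝ => v p.1 p.2) p (1, 0) := by
    funext p; exact (aux1 hv p.1 p.2).deriv
  rw [Smooth2, he]
  exact (hv.fderiv_right (by simp)).clm_apply contDiff_const

lemma smooth2_px {v : ℝ → ℝ → ℝ} (hv : Smooth2 v) : Smooth2 (px v) := by
  have he : (fun p : ℝ × ℝ => px v p.1 p.2)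
      = fun p : ℝ × ℝ => fderiv ℝ (fun p : ℝ × ℝ => v p.1 p.2) p (0, 1) := by
    funext p; exact (aux2 hv p.1 p.2).deriv
  rw [Smooth2, he]
  exact (hv.fderiv_right (by simp)).clm_apply contDiff_const

lemma clairaut {v : ℝ → ℝ → ℝ} (hv : Smooth2 v) (t x : ℝ) :
    pt (px v) t x = px (pt v) t x := by
  set F : ℝ × ℝ → ℝ := fun p => v p.1 p.2 with hF
  have hdF : ∀ p, HasFDerivAt F (fderiv ℝ F p) p := fun p => ((hv.differentiable (by simp)) p).hasFDerivAt
  have hdF2 : HasFDerivAt (fderiv ℝ F) (fderiv ℝ (fderiv ℝ F) (t, x)) (t, x) :=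
    (((hv.fderiv_right (m := 1) (WithTop.coe_le_coe.mpr le_top)).differentiable one_ne_zero) (t, x)).hasFDerivAt
  have hsym := second_derivative_symmetric hdF hdF2 ((1:ℝ), (0:ℝ)) ((0:ℝ), (1:ℝ))
  have h1 : HasDerivAt (fun s => fderiv ℝ F (s, x)) (fderiv ℝ (fderiv ℝ F) (t, x) (1, 0)) t :=
    hdF2.comp_hasDerivAt t (HasDerivAt.prodMk (hasDerivAt_id t) (hasDerivAt_const t x))
  have h2 : HasDerivAt (fun y => fderiv ℝ F (t, y)) (fderiv ℝ (fderiv ℝ F) (t, x) (0, 1)) x :=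
    hdF2.comp_hasDerivAt x (HasDerivAt.prodMk (hasDerivAt_const x t) (hasDerivAt_id x))
  have g1 : HasDerivAt (fun s => fderiv ℝ F (s, x) ((0:ℝ), (1:ℝ)))
      (fderiv ℝ (fderiv ℝ F) (t, x) (1, 0) (0, 1)) t := by
    simpa using h1.clm_apply (hasDerivAt_const t ((0:ℝ), (1:ℝ)))
  have g2 : HasDerivAt (fun y => fderiv ℝ F (t, y) ((1:ℝ), (0:ℝ)))
      (fderiv ℝ (fderiv ℝ F) (t, x) (0, 1) (1, 0)) x := by
    simpa using h2.clm_apply (hasDerivAt_const x ((1:ℝ), (0:ℝ)))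
  have e1 : pt (px v) t x = fderiv ℝ (fderiv ℝ F) (t, x) (1, 0) (0, 1) := by
    have : (fun s => px v s x) = fun s => fderiv ℝ F (s, x) ((0:ℝ), (1:ℝ)) := by
      funext s; exact (aux2 hv s x).deriv
    rw [pt]; rw [this]; exact g1.deriv
  have e2 : px (pt v) t x = fderiv ℝ (fderiv ℝ F) (t, x) (0, 1) (1, 0) := by
    have : (fun y => pt v t y) = fun y => fderiv ℝ F (t, y) ((1:ℝ), (0:ℝ)) := by
      funext y; exact (aux1 hv t y).deriv
    rw [px]; rw [this]; exact g2.deriv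
  rw [e1, e2, hsym]


/-- Cole–Hopf transformation maps solutions of the linear equation to solutions of the
once-integrated generalized Burgers −1 flow equation. -/
theorem burgers_gen_neg1_cole_hopf
    (κ c : ℝ) (v : ℝ → ℝ → ℝ)
    (hv : Smooth2 v) (hvne : ∀ t x, v t x ≠ 0)
    (hlin : ∀ t x, px (pt v) t x - κ * pt v t x = (1/2) * c * v t x)
    (u : ℝ → ℝ → ℝ) (hdef : ∀ t x, u t x = 2 * px v t x / v t x) :
    ∀ t x, (u t x - 2*κ) * px (pt u) t x =
      -(1/2) * (u t x - 2*κ)^2 * pt u t x + px u t x * (pt u t x - c) := by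
  have hm : ∀ s y, px (pt v) s y = κ * pt v s y + 1/2 * (c * v s y) := by
    intro s y; linarith [hlin s y]
  have hm' : ∀ s y, pt (px v) s y = κ * pt v s y + 1/2 * (c * v s y) := by
    intro s y; rw [clairaut hv]; exact hm s y
  have hut : ∀ s y, pt u s y =
      (2 * (κ * pt v s y + 1/2 * (c * v s y)) * v s y - 2 * px v s y * pt v s y) / v s y ^ 2 := by
    intro s y
    have h1 : HasDerivAt (fun s' => px v s' y) (κ * pt v s y + 1/2 * (c * v s y)) s := by
      have h := hasDerivAt_pt (smooth2_px hv) s y; rwa [hm' s y] at h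
    have h2 := hasDerivAt_pt hv s y
    have he : (fun s' => u s' y) = fun s' => 2 * px v s' y / v s' y := funext fun s' => hdef s' y
    have H := (h1.const_mul 2).div h2 (hvne s y)
    show deriv (fun s' => u s' y) s = _
    rw [he]; exact H.deriv
  have hux : ∀ s y, px u s y =
      (2 * px (px v) s y * v s y - 2 * px v s y * px v s y) / v s y ^ 2 := by
    intro s y
    have h1 := hasDerivAt_px (smooth2_px hv) s y
    have h2 := hasDerivAt_px hv s y
    have he : (fun y' => u s y') = fun y' => 2 * px v s y' / v s y' := funext fun y' => hdef s y'
    have H := (h1.const_mul 2).div h2 (hvne s y)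
    show deriv (fun y' => u s y') y = _
    rw [he]; exact H.deriv
  intro t x
  have hb : HasDerivAt (fun y => pt v t y) (κ * pt v t x + 1/2 * (c * v t x)) x := by
    have h := hasDerivAt_px (smooth2_pt hv) t x; rwa [hm t x] at h
  have ha := hasDerivAt_px hv t x
  have hq := hasDerivAt_px (smooth2_px hv) t x
  have hN := ((((hb.const_mul κ).add ((ha.const_mul c).const_mul (1/2))).const_mul 2).mul ha).sub
      ((hq.const_mul 2).mul hb)
  have hD := ha.pow 2
  have H := hN.div hD (pow_ne_zero 2 (hvne t x))
  have he2 : (fun y => pt u t y) = fun y =>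
      (2 * (κ * pt v t y + 1/2 * (c * v t y)) * v t y - 2 * px v t y * pt v t y) / v t y ^ 2 :=
    funext fun y => hut t y
  have e3 : px (pt u) t x =
      (((2 * (κ * (κ * pt v t x + 1 / 2 * (c * v t x)) + 1 / 2 * (c * px v t x)) * v t x +
              2 * (κ * pt v t x + 1 / 2 * (c * v t x)) * px v t x -
            (2 * px (px v) t x * pt v t x + 2 * px v t x * (κ * pt v t x + 1 / 2 * (c * v t x)))) *
          v t x ^ 2 -
        (2 * (κ * pt v t x + 1 / 2 * (c * v t x)) * v t x - 2 * px v t x * pt v t x) *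
          (2 * v t x ^ 1 * px v t x)) /
      (v t x ^ 2) ^ 2) := by
    show deriv (fun y => pt u t y) x = _
    rw [he2]; refine H.deriv.trans ?_; norm_num
  rw [e3, hut t x, hux t x, hdef t x]
  have ha0 := hvne t x
  field_simp
  ring
end

section
/- Let κ ∈ ℝ and let (u, h, h1, w) be a smooth solution on ℝ² of the generalized mKdV −1 flow system. Then ∂_x( (h_x + u·h1)² − κ·(h² + h1²) ) = 0 at every point of ℝ²; that is, (h_x + u·h1)² − κ·(h² + h1²) is a first integral (independent of x). -/
lemma smooth2_slice {f : ℝ → ℝ → ℝ} (hf : Smooth2 f) (t : ℝ) :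
    Differentiable ℝ (fun y => f t y) := by
  have : ContDiff ℝ (⊤ : ℕ∞) (fun y : ℝ => f t y) :=
    hf.comp (contDiff_const.prodMk contDiff_id)
  exact this.differentiable (by simp)

/-- First integral of the generalized mKdV −1 flow system. -/
theorem mkdv_gen_neg1_first_integral
    (κ : ℝ) (u h h1 w : ℝ → ℝ → ℝ)
    (hu : Smooth2 u) (hh : Smooth2 h) (hh1 : Smooth2 h1) (hw : Smooth2 w)
    (sys1 : ∀ t x, pt u t x = h t x)
    (sys2 : ∀ t x, px w t x = κ * h t x)
    (sys3 : ∀ t x, w t x = px h t x + u t x * h1 t x)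
    (sys4 : ∀ t x, px h1 t x = u t x * h t x) :
    ∀ t x, px (fun t x => (px h t x + u t x * h1 t x)^2 - κ * ((h t x)^2 + (h1 t x)^2)) t x = 0 := by
  intro t x
  have key : (fun x => (px h t x + u t x * h1 t x)^2 - κ * ((h t x)^2 + (h1 t x)^2))
      = fun x => (w t x)^2 - κ * ((h t x)^2 + (h1 t x)^2) := by
    funext y; rw [← sys3 t y]
  have dw := smooth2_slice hw t
  have dh := smooth2_slice hh t
  have dh1 := smooth2_slice hh1 t
  have du := smooth2_slice hu t
  have hx : deriv (fun y => h t y) x = w t x - u t x * h1 t x := by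
    have := sys3 t x; unfold px at this; linarith
  show deriv (fun y => (px h t y + u t y * h1 t y)^2 - κ * ((h t y)^2 + (h1 t y)^2)) x = 0
  rw [key]
  rw [deriv_fun_sub (((dw x).fun_pow 2)) ((((dh x).fun_pow 2).fun_add ((dh1 x).fun_pow 2)).const_mul κ)]
  rw [deriv_fun_pow (dw x) 2, deriv_const_mul _ (((dh x).fun_pow 2).fun_add ((dh1 x).fun_pow 2))]
  rw [deriv_fun_add ((dh x).fun_pow 2) ((dh1 x).fun_pow 2), deriv_fun_pow (dh x) 2, deriv_fun_pow (dh1 x) 2]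
  have h2 := sys2 t x
  have h4 := sys4 t x
  unfold px at h2 h4
  rw [h2, h4, hx]
  ring
end

section
/- Let κ, c̃ ∈ ℝ and let (u, h, h1, w) be a smooth solution on ℝ² of the generalized mKdV −1 flow system such that (h_x + u·h1)² − κ·(h² + h1²) = c̃ holds identically on ℝ². Then u satisfies the once-integrated generalized mKdV −1 flow equation, in cleared-denominator form: ( u_x·u_{tx} + u·((κ − u²)·u_t − u_{txx}) )² − κ·( u_x²·u_t² + ((κ − u²)·u_t − u_{txx})² ) = c̃·u_x² at every point of ℝ². -/
open scoped ContDiff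


private lemma smooth2_slice_s6 {u : ℝ → ℝ → ℝ} (hu : Smooth2 u) (t : ℝ) :
    ContDiff ℝ ∞ (fun y => u t y) := by
  have : (fun y => u t y) = (fun p : ℝ × ℝ => u p.1 p.2) ∘ (fun y => (t, y)) := rfl
  rw [this]
  exact (hu.of_le (by simp)).comp (contDiff_const.prodMk contDiff_id)

private lemma smooth2_px_diff {u : ℝ → ℝ → ℝ} (hu : Smooth2 u) (t x : ℝ) :
    DifferentiableAt ℝ (fun y => px u t y) x := by
  have h1 : ContDiff ℝ ∞ (deriv (fun y => u t y)) :=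
    (contDiff_infty_iff_deriv.mp (smooth2_slice_s6 hu t)).2
  have : (fun y => px u t y) = deriv (fun y => u t y) := rfl
  rw [this]
  exact (h1.differentiable (by simp)).differentiableAt

/-- Once-integrated generalized mKdV −1 flow equation, in cleared-denominator form. -/
theorem mkdv_gen_neg1_integrated
    (κ c : ℝ) (u h h1 w : ℝ → ℝ → ℝ)
    (hu : Smooth2 u) (hh : Smooth2 h) (hh1 : Smooth2 h1) (hw : Smooth2 w)
    (sys1 : ∀ t x, pt u t x = h t x)
    (sys2 : ∀ t x, px w t x = κ * h t x)
    (sys3 : ∀ t x, w t x = px h t x + u t x * h1 t x)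
    (sys4 : ∀ t x, px h1 t x = u t x * h t x)
    (hfi : ∀ t x, (px h t x + u t x * h1 t x)^2 - κ * ((h t x)^2 + (h1 t x)^2) = c) :
    ∀ t x,
      (px u t x * px (pt u) t x
        + u t x * ((κ - (u t x)^2) * pt u t x - px (px (pt u)) t x))^2
      - κ * ((px u t x)^2 * (pt u t x)^2
        + ((κ - (u t x)^2) * pt u t x - px (px (pt u)) t x)^2)
      = c * (px u t x)^2 := by
  have hptu : pt u = h := funext fun t => funext fun x => sys1 t x
  intro t x
  -- differentiate sys3 in x
  have dH : DifferentiableAt ℝ (fun y => px h t y) x := smooth2_px_diff hh t x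
  have dU : DifferentiableAt ℝ (fun y => u t y) x :=
    ((smooth2_slice_s6 hu t).differentiable (by simp)).differentiableAt
  have dH1 : DifferentiableAt ℝ (fun y => h1 t y) x :=
    ((smooth2_slice_s6 hh1 t).differentiable (by simp)).differentiableAt
  have ew : (fun y => w t y) = fun y => px h t y + u t y * h1 t y :=
    funext fun y => sys3 t y
  have hderiv : px w t x = px (px h) t x + (px u t x * h1 t x + u t x * px h1 t x) := by
    show deriv (fun y => w t y) x = _
    rw [ew]
    rw [deriv_fun_add dH (dU.fun_mul dH1), deriv_fun_mul dU dH1]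
    rfl
  have key : px u t x * h1 t x = (κ - (u t x)^2) * h t x - px (px h) t x := by
    have h2 := sys2 t x
    rw [hderiv, sys4 t x] at h2
    nlinarith [h2]
  rw [hptu, ← key]
  have := hfi t x
  nlinarith [this, sq_nonneg (px u t x)]
end

section
/- Let κ ∈ ℝ and let (u, h, h1, h2, w) be a smooth solution on ℝ² of the generalized KdV −1 flow system such that u_x(t,x) ≠ 0 for all (t,x) ∈ ℝ². Then u satisfies the generalized KdV −1 flow equation u_{txxx} = (u_{xx}/u_x)·u_{txx} + (κ − (2/3)u)·(u_{tx} − (u_{xx}/u_x)·u_t) − u_x·u_t at every point of ℝ². -/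
private lemma smooth_fix {u : ℝ → ℝ → ℝ} (hu : Smooth2 u) (t : ℝ) :
    ContDiff ℝ (⊤ : ℕ∞) (fun x => u t x) :=
  hu.comp (contDiff_const.prodMk contDiff_id)

/-- Generalized KdV −1 flow: the system implies the single non-evolutionary equation. -/
theorem kdv_gen_neg1_flow
    (κ : ℝ) (u h h1 h2 w : ℝ → ℝ → ℝ)
    (hu : Smooth2 u) (hh : Smooth2 h) (hh1 : Smooth2 h1) (hh2 : Smooth2 h2) (hw : Smooth2 w)
    (hux : ∀ t x, px u t x ≠ 0)
    (sys1 : ∀ t x, pt u t x = h t x)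
    (sys2 : ∀ t x, px w t x = κ * h t x)
    (sys3 : ∀ t x, w t x = px h t x + (1/3) * h2 t x + (1/3) * u t x * h1 t x)
    (sys4 : ∀ t x, px h1 t x = h t x)
    (sys5 : ∀ t x, px h2 t x = u t x * h t x) :
    ∀ t x, px (px (px (pt u))) t x =
      (px (px u) t x / px u t x) * px (px (pt u)) t x
      + (κ - (2/3) * u t x) * (px (pt u) t x - (px (px u) t x / px u t x) * pt u t x)
      - px u t x * pt u t x := by
  have hpt : pt u = h := funext fun t => funext fun x => sys1 t x
  intro t x
  rw [hpt]
  -- fixed-time slices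
  set U : ℝ → ℝ := fun y => u t y with hUdef
  set H : ℝ → ℝ := fun y => h t y with hHdef
  set H1 : ℝ → ℝ := fun y => h1 t y with hH1def
  set H2 : ℝ → ℝ := fun y => h2 t y with hH2def
  set W : ℝ → ℝ := fun y => w t y with hWdef
  have hU : ContDiff ℝ (⊤ : ℕ∞) U := smooth_fix hu t
  have hH : ContDiff ℝ (⊤ : ℕ∞) H := smooth_fix hh t
  have hH1 : ContDiff ℝ (⊤ : ℕ∞) H1 := smooth_fix hh1 t
  have hH2 : ContDiff ℝ (⊤ : ℕ∞) H2 := smooth_fix hh2 t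
  have hU' : ContDiff ℝ ((⊤ : ℕ∞) : WithTop ℕ∞) (deriv U) := (contDiff_infty_iff_deriv.mp (hU.of_le (by simp))).2
  have hH' : ContDiff ℝ ((⊤ : ℕ∞) : WithTop ℕ∞) (deriv H) := (contDiff_infty_iff_deriv.mp (hH.of_le (by simp))).2
  -- step A: deriv (deriv H) y = κ*H y - 2/3*(U y*H y) - 1/3*(deriv U y * H1 y)
  have eqA : ∀ y, deriv (deriv H) y
      = κ * H y - 2/3 * (U y * H y) - 1/3 * (deriv U y * H1 y) := by
    intro y
    have dH' : HasDerivAt (deriv H) (deriv (deriv H) y) y :=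
      (hH'.differentiable (by norm_num) y).hasDerivAt
    have dU : HasDerivAt U (deriv U y) y := (hU.differentiable (by simp) y).hasDerivAt
    have dH1 : HasDerivAt H1 (H y) y := by
      have := (hH1.differentiable (by simp) y).hasDerivAt
      rwa [show deriv H1 y = H y from sys4 t y] at this
    have dH2 : HasDerivAt H2 (U y * H y) y := by
      have := (hH2.differentiable (by simp) y).hasDerivAt
      rwa [show deriv H2 y = U y * H y from sys5 t y] at this
    have hWeq : W = fun z => deriv H z + 1/3 * H2 z + 1/3 * U z * H1 z :=
      funext fun z => sys3 t z
    have dRHS : HasDerivAt (fun z => deriv H z + 1/3 * H2 z + 1/3 * U z * H1 z)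
        (deriv (deriv H) y + 1/3 * (U y * H y)
          + (1/3 * deriv U y * H1 y + 1/3 * U y * H y)) y := by
      have t2 : HasDerivAt (fun z => 1/3 * H2 z) (1/3 * (U y * H y)) y := dH2.const_mul _
      have t3a : HasDerivAt (fun z => 1/3 * U z) (1/3 * deriv U y) y := dU.const_mul _
      have t3 : HasDerivAt (fun z => 1/3 * U z * H1 z)
          (1/3 * deriv U y * H1 y + 1/3 * U y * H y) y := t3a.mul dH1
      exact (dH'.add t2).add t3
    have dW : HasDerivAt W (deriv (deriv H) y + 1/3 * (U y * H y)
          + (1/3 * deriv U y * H1 y + 1/3 * U y * H y)) y := hWeq ▸ dRHS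
    have : deriv W y = deriv (deriv H) y + 1/3 * (U y * H y)
          + (1/3 * deriv U y * H1 y + 1/3 * U y * H y) := dW.deriv
    have h2' : deriv W y = κ * H y := sys2 t y
    rw [this] at h2'
    linarith [h2']
  -- step B: third derivative
  have dU : HasDerivAt U (deriv U x) x := (hU.differentiable (by simp) x).hasDerivAt
  have dH : HasDerivAt H (deriv H x) x := (hH.differentiable (by simp) x).hasDerivAt
  have dU' : HasDerivAt (deriv U) (deriv (deriv U) x) x :=
    (hU'.differentiable (by norm_num) x).hasDerivAt
  have dH1 : HasDerivAt H1 (H x) x := by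
    have := (hH1.differentiable (by simp) x).hasDerivAt
    rwa [show deriv H1 x = H x from sys4 t x] at this
  have hA : deriv (deriv H) = fun y => κ * H y - 2/3 * (U y * H y) - 1/3 * (deriv U y * H1 y) :=
    funext eqA
  have dRHS : HasDerivAt (fun y => κ * H y - 2/3 * (U y * H y) - 1/3 * (deriv U y * H1 y))
      (κ * deriv H x - 2/3 * (deriv U x * H x + U x * deriv H x)
        - 1/3 * (deriv (deriv U) x * H1 x + deriv U x * H x)) x :=
    ((dH.const_mul κ).sub ((dU.mul dH).const_mul _)).sub ((dU'.mul dH1).const_mul _)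
  have dHH : HasDerivAt (deriv (deriv H))
      (κ * deriv H x - 2/3 * (deriv U x * H x + U x * deriv H x)
        - 1/3 * (deriv (deriv U) x * H1 x + deriv U x * H x)) x := hA ▸ dRHS
  have eqB : deriv (deriv (deriv H)) x
      = κ * deriv H x - 2/3 * (deriv U x * H x + U x * deriv H x)
        - 1/3 * (deriv (deriv U) x * H1 x + deriv U x * H x) := dHH.deriv
  have eqAx := eqA x
  have hne : deriv U x ≠ 0 := hux t x
  show deriv (deriv (deriv H)) x
      = (deriv (deriv U) x / deriv U x) * deriv (deriv H) x
      + (κ - 2/3 * U x) * (deriv H x - (deriv (deriv U) x / deriv U x) * H x)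
      - deriv U x * H x
  set r := deriv (deriv U) x / deriv U x with hrdef
  have hr : r * deriv U x = deriv (deriv U) x := div_mul_cancel₀ _ hne
  linear_combination eqB - r * eqAx + (1/3 * H1 x) * hr
end

section
/- Let κ ∈ ℝ and let (u, h, h1, h2, w) be a smooth solution on ℝ² of the generalized KdV −1 flow system. Then ∂_x( h1·h_x + ((1/3)u − (1/2)κ)·h1² − (1/2)h² ) = 0 at every point of ℝ²; that is, h1·h_x + ((1/3)u − (1/2)κ)·h1² − (1/2)h² is a first integral (independent of x). -/
/-- First integral of the generalized KdV −1 flow system. -/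
theorem kdv_gen_neg1_first_integral
    (κ : ℝ) (u h h1 h2 w : ℝ → ℝ → ℝ)
    (hu : Smooth2 u) (hh : Smooth2 h) (hh1 : Smooth2 h1) (hh2 : Smooth2 h2) (hw : Smooth2 w)
    (sys1 : ∀ t x, pt u t x = h t x)
    (sys2 : ∀ t x, px w t x = κ * h t x)
    (sys3 : ∀ t x, w t x = px h t x + (1/3) * h2 t x + (1/3) * u t x * h1 t x)
    (sys4 : ∀ t x, px h1 t x = h t x)
    (sys5 : ∀ t x, px h2 t x = u t x * h t x) :
    ∀ t x, px (fun t x =>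
      h1 t x * px h t x + ((1/3) * u t x - (1/2) * κ) * (h1 t x)^2 - (1/2) * (h t x)^2) t x = 0 := by
  have fix : ∀ f : ℝ → ℝ → ℝ, Smooth2 f → ∀ t, ContDiff ℝ (⊤ : ℕ∞) (fun x => f t x) := by
    intro f hf t
    exact hf.comp (contDiff_const.prodMk contDiff_id)
  intro t x
  have hU := fix u hu t
  have hH := fix h hh t
  have hH1 := fix h1 hh1 t
  have hH2 := fix h2 hh2 t
  have hW := fix w hw t
  have dU : ∀ y, HasDerivAt (fun z => u t z) (deriv (fun z => u t z) y) y :=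
    fun y => ((hU.differentiable (by simp)) y).hasDerivAt
  have dW : ∀ y, HasDerivAt (fun z => w t z) (κ * h t y) y := by
    intro y
    rw [← sys2 t y]
    exact ((hW.differentiable (by simp)) y).hasDerivAt
  have dH1 : ∀ y, HasDerivAt (fun z => h1 t z) (h t y) y := by
    intro y
    rw [← sys4 t y]
    exact ((hH1.differentiable (by simp)) y).hasDerivAt
  have dH2 : ∀ y, HasDerivAt (fun z => h2 t z) (u t y * h t y) y := by
    intro y
    rw [← sys5 t y]
    exact ((hH2.differentiable (by simp)) y).hasDerivAt
  set DH : ℝ → ℝ := fun y => w t y - (1/3) * h2 t y - (1/3) * u t y * h1 t y with hDHdef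
  have hpxh : ∀ y, px h t y = DH y := by
    intro y
    have := sys3 t y
    simp only [hDHdef]
    linarith
  have dH : ∀ y, HasDerivAt (fun z => h t z) (DH y) y := by
    intro y
    rw [← hpxh y]
    exact ((hH.differentiable (by simp)) y).hasDerivAt
  have dDH : HasDerivAt DH
      (κ * h t x - (1/3) * (u t x * h t x)
        - ((1/3) * deriv (fun z => u t z) x * h1 t x + (1/3) * u t x * h t x)) x := by
    exact ((dW x).sub ((dH2 x).const_mul (1/3))).sub
      (((dU x).const_mul (1/3)).mul (dH1 x))
  set G : ℝ → ℝ := fun y =>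
    h1 t y * DH y + ((1/3) * u t y - (1/2) * κ) * (h1 t y)^2 - (1/2) * (h t y)^2 with hGdef
  have dG := (((dH1 x).mul dDH).add
      ((((dU x).const_mul (1/3)).sub_const ((1/2) * κ)).mul ((dH1 x).pow 2))).sub
      (((dH x).pow 2).const_mul (1/2))
  have hFG : (fun y => h1 t y * deriv (fun z => h t z) y
      + ((1/3) * u t y - (1/2) * κ) * (h1 t y)^2 - (1/2) * (h t y)^2) = G := by
    funext y
    rw [show deriv (fun z => h t z) y = DH y from hpxh y]
  show px (fun t x => h1 t x * px h t x + ((1/3) * u t x - (1/2) * κ) * (h1 t x)^2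
      - (1/2) * (h t x)^2) t x = 0
  simp only [px]
  rw [hFG, (show HasDerivAt G _ x from dG).deriv]
  push_cast
  norm_num only [Pi.pow_apply]
  ring
end

section
/- Let κ ∈ ℝ and let (u, h, h1, h2, w) be a smooth solution on ℝ² of the generalized KdV −1 flow system. Then the local conservation law ∂_t( (1/2)u² − κ·u ) = ∂_x( h2 − w ) holds at every point of ℝ². -/
lemma smooth2_diff_t {u : ℝ → ℝ → ℝ} (hu : Smooth2 u) (x : ℝ) :
    Differentiable ℝ (fun s => u s x) := by
  have : Differentiable ℝ (fun p : ℝ × ℝ => u p.1 p.2) := hu.differentiable (by simp)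
  exact fun s => by have := (this (s, x)).comp s (((differentiable_id (𝕜 := ℝ) (E := ℝ)).prodMk (differentiable_const x)) s); exact this

lemma smooth2_diff_x {u : ℝ → ℝ → ℝ} (hu : Smooth2 u) (t : ℝ) :
    Differentiable ℝ (fun y => u t y) := by
  have : Differentiable ℝ (fun p : ℝ × ℝ => u p.1 p.2) := hu.differentiable (by simp)
  exact fun y => (this (t, y)).comp y (((differentiable_const t).prodMk differentiable_id) y)

/-- Local conservation law for the generalized KdV −1 flow. -/
theorem kdv_gen_neg1_conservation
    (κ : ℝ) (u h h1 h2 w : ℝ → ℝ → ℝ)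
    (hu : Smooth2 u) (hh : Smooth2 h) (hh1 : Smooth2 h1) (hh2 : Smooth2 h2) (hw : Smooth2 w)
    (sys1 : ∀ t x, pt u t x = h t x)
    (sys2 : ∀ t x, px w t x = κ * h t x)
    (sys3 : ∀ t x, w t x = px h t x + (1/3) * h2 t x + (1/3) * u t x * h1 t x)
    (sys4 : ∀ t x, px h1 t x = h t x)
    (sys5 : ∀ t x, px h2 t x = u t x * h t x) :
    ∀ t x, pt (fun t x => (1/2) * (u t x)^2 - κ * u t x) t x
      = px (fun t x => h2 t x - w t x) t x := by
  intro t x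
  have hut : HasDerivAt (fun s => u s x) (h t x) t := by
    have := ((smooth2_diff_t hu x) t).hasDerivAt
    rwa [show deriv (fun s => u s x) t = h t x from sys1 t x] at this
  have lhs : HasDerivAt (fun s => (1/2) * (u s x)^2 - κ * u s x)
      ((1/2) * (2 * u t x ^ 1 * h t x) - κ * h t x) t :=
    ((hut.pow 2).const_mul (1/2)).sub (hut.const_mul κ)
  have h2x : HasDerivAt (fun y => h2 t y) (u t x * h t x) x := by
    have := ((smooth2_diff_x hh2 t) x).hasDerivAt
    rwa [show deriv (fun y => h2 t y) x = u t x * h t x from sys5 t x] at this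
  have hwx : HasDerivAt (fun y => w t y) (κ * h t x) x := by
    have := ((smooth2_diff_x hw t) x).hasDerivAt
    rwa [show deriv (fun y => w t y) x = κ * h t x from sys2 t x] at this
  have rhs : HasDerivAt (fun y => h2 t y - w t y) (u t x * h t x - κ * h t x) x :=
    h2x.sub hwx
  show deriv (fun s => (1/2) * (u s x)^2 - κ * u s x) t
      = deriv (fun y => h2 t y - w t y) x
  rw [lhs.deriv, rhs.deriv]
  ring
end

section
/- Let κ ∈ ℝ and let (u, h, h1, h2, w) be a smooth solution on ℝ² of the generalized Sawada–Kotera −1 flow system. Then ∂_x( w·w_{xx} − (1/2)w_x² + 2u·w² − κ·( h·h_{xx} − (1/2)h_x² + u·h² + h1·h2 ) ) = 0 at every point of ℝ²; that is, w·w_{xx} − (1/2)w_x² + 2u·w² − κ·( h·h_{xx} − (1/2)h_x² + u·h² + h1·h2 ) is a first integral (independent of x). -/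
/-- First integral of the generalized Sawada–Kotera −1 flow system. -/
theorem sk_gen_neg1_first_integral
    (κ : ℝ) (u h h1 h2 w : ℝ → ℝ → ℝ)
    (hu : Smooth2 u) (hh : Smooth2 h) (hh1 : Smooth2 h1) (hh2 : Smooth2 h2) (hw : Smooth2 w)
    (sys1 : ∀ t x, pt u t x = h t x)
    (sys2 : ∀ t x, px (px (px w)) t x + 4 * u t x * px w t x + 2 * px u t x * w t x = κ * h t x)
    (sys3 : ∀ t x, w t x = px (px (px h)) t x + 2 * u t x * px h t x + px u t x * h t x
      + (px (px u) t x + (1/2) * (u t x)^2) * h1 t x + h2 t x)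
    (sys4 : ∀ t x, px h1 t x = h t x)
    (sys5 : ∀ t x, px h2 t x = (px (px u) t x + (1/2) * (u t x)^2) * h t x) :
    ∀ t x, px (fun t x =>
      w t x * px (px w) t x - (1/2) * (px w t x)^2 + 2 * u t x * (w t x)^2
      - κ * (h t x * px (px h) t x - (1/2) * (px h t x)^2
          + u t x * (h t x)^2 + h1 t x * h2 t x)) t x = 0 := by
  intro t x
  have slice : ∀ (f : ℝ → ℝ → ℝ), Smooth2 f → ContDiff ℝ (⊤ : ℕ∞) (fun y => f t y) := by
    intro f hf
    have : ContDiff ℝ (⊤ : ℕ∞) (fun y : ℝ => ((t, y) : ℝ × ℝ)) := contDiff_const.prodMk contDiff_id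
    exact hf.comp this
  have dC : ∀ f : ℝ → ℝ, ContDiff ℝ (↑(⊤ : ℕ∞)) f → ContDiff ℝ (↑(⊤ : ℕ∞)) (deriv f) :=
    fun f hf => (contDiff_infty_iff_deriv.mp hf).2
  have dA : ∀ f : ℝ → ℝ, ContDiff ℝ (↑(⊤ : ℕ∞)) f → HasDerivAt f (deriv f x) x :=
    fun f hf => ((hf.differentiable (by simp)) x).hasDerivAt
  set W : ℝ → ℝ := fun y => w t y with hWdef
  set U : ℝ → ℝ := fun y => u t y with hUdef
  set H : ℝ → ℝ := fun y => h t y with hHdef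
  set H1 : ℝ → ℝ := fun y => h1 t y with hH1def
  set H2 : ℝ → ℝ := fun y => h2 t y with hH2def
  have cW : ContDiff ℝ (↑(⊤ : ℕ∞)) W := (slice w hw).of_le (by simp)
  have cW1 := dC _ cW
  have cW2 := dC _ cW1
  have cU : ContDiff ℝ (↑(⊤ : ℕ∞)) U := (slice u hu).of_le (by simp)
  have cH : ContDiff ℝ (↑(⊤ : ℕ∞)) H := (slice h hh).of_le (by simp)
  have cH1 := dC _ cH
  have cH2 := dC _ cH1
  have cH1f : ContDiff ℝ (↑(⊤ : ℕ∞)) H1 := (slice h1 hh1).of_le (by simp)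
  have cH2f : ContDiff ℝ (↑(⊤ : ℕ∞)) H2 := (slice h2 hh2).of_le (by simp)
  have hW0 := dA _ cW
  have hW1 := dA _ cW1
  have hW2 := dA _ cW2
  have hU0 := dA _ cU
  have hH0 := dA _ cH
  have hH1 := dA _ cH1
  have hH2 := dA _ cH2
  have hH1f := dA _ cH1f
  have hH2f := dA _ cH2f
  have e2 : deriv (deriv (deriv W)) x + 4 * U x * deriv W x + 2 * deriv U x * W x
      = κ * H x := sys2 t x
  have e3 : W x = deriv (deriv (deriv H)) x + 2 * U x * deriv H x + deriv U x * H x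
      + (deriv (deriv U) x + (1/2) * (U x)^2) * H1 x + H2 x := sys3 t x
  have e4 : deriv H1 x = H x := sys4 t x
  have e5 : deriv H2 x = (deriv (deriv U) x + (1/2) * (U x)^2) * H x := sys5 t x
  have hE := (((hW0.mul hW2).sub ((hW1.pow 2).const_mul ((1:ℝ)/2))).add
      ((hU0.const_mul (2:ℝ)).mul (hW0.pow 2))).sub
    (((((hH0.mul hH2).sub ((hH1.pow 2).const_mul ((1:ℝ)/2))).add
      (hU0.mul (hH0.pow 2))).add (hH1f.mul hH2f)).const_mul κ)
  refine Eq.trans hE.deriv ?_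
  simp only [Pi.pow_apply]
  linear_combination (W x) * e2 + (κ * H x) * e3 - κ * H2 x * e4 - κ * H1 x * e5
end

section
/- Let κ ∈ ℝ and let (u, h, h1, h2, w) be a smooth solution on ℝ² of the generalized Kupershmidt −1 flow system. Define J = h·h_{xxxx} − h_x·h_{xxx} + (1/2)h_{xx}² + 3·∂_x²( (u_x − u²)·h² ) − 9·∂_x( (u_x − u²)·h )·h_x − ( 2u_{xxx} + 2u·u_{xx} − (5/2)u_x² + 3u²·u_x − (9/2)u⁴ )·h². Then ∂_x( (1/2)w² − κ·( J − 2·h1·h2 ) ) = 0 at every point of ℝ²; that is, (1/2)w² − κ·( J − 2·h1·h2 ) is a first integral (independent of x). -/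
open scoped ContDiff


/-- The quantity B in the generalized Kupershmidt −1 flow system. -/
noncomputable def KupB (u : ℝ → ℝ → ℝ) : ℝ → ℝ → ℝ := fun t x =>
  px (px (px (px u))) t x + 5 * (px u t x - (u t x)^2) * px (px u) t x
    - 5 * u t x * (px u t x)^2 + (u t x)^5

/-- The quantity A in the generalized Kupershmidt −1 flow system. -/
noncomputable def KupA (u h : ℝ → ℝ → ℝ) : ℝ → ℝ → ℝ := fun t x =>
  px (px (px (px (px h)))) t x
  + 6 * (px u t x - (u t x)^2) * px (px (px h)) t x
  + 9 * (px (px u) t x - 2 * u t x * px u t x) * px (px h) t x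
  + (5 * px (px (px u)) t x - 22 * u t x * px (px u) t x - 13 * (px u t x)^2
      - 6 * (u t x)^2 * px u t x + 9 * (u t x)^4) * px h t x
  + (px (px (px (px u))) t x - 8 * u t x * px (px (px u)) t x
      - 15 * px u t x * px (px u) t x - 3 * (u t x)^2 * px (px u) t x
      - 6 * u t x * (px u t x)^2 + 18 * (u t x)^3 * px u t x) * h t x

/-- The quantity J in the first integral of the generalized Kupershmidt −1 flow. -/
noncomputable def KupJ (u h : ℝ → ℝ → ℝ) : ℝ → ℝ → ℝ := fun t x =>
  h t x * px (px (px (px h))) t x - px h t x * px (px (px h)) t x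
  + (1/2) * (px (px h) t x)^2
  + 3 * px (px (fun t x => (px u t x - (u t x)^2) * (h t x)^2)) t x
  - 9 * px (fun t x => (px u t x - (u t x)^2) * h t x) t x * px h t x
  - (2 * px (px (px u)) t x + 2 * u t x * px (px u) t x - (5/2) * (px u t x)^2
      + 3 * (u t x)^2 * px u t x - (9/2) * (u t x)^4) * (h t x)^2

lemma kup_key (κ : ℝ) (f g p1 p2 ww : ℝ → ℝ)
    (hf : ContDiff ℝ ∞ f) (hg : ContDiff ℝ ∞ g) (hp1 : ContDiff ℝ ∞ p1)
    (hp2 : ContDiff ℝ ∞ p2) (hww : ContDiff ℝ ∞ ww)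
    (e2 : ∀ y, deriv ww y = κ * g y)
    (e3 : ∀ y, ww y = (deriv (deriv (deriv (deriv (deriv g)))) y + 6 * (deriv f y - (f y)^2) * deriv (deriv (deriv g)) y + 9 * (deriv (deriv f) y - 2 * f y * deriv f y) * deriv (deriv g) y + (5 * deriv (deriv (deriv f)) y - 22 * f y * deriv (deriv f) y - 13 * (deriv f y)^2 - 6 * (f y)^2 * deriv f y + 9 * (f y)^4) * deriv g y + (deriv (deriv (deriv (deriv f))) y - 8 * f y * deriv (deriv (deriv f)) y - 15 * deriv f y * deriv (deriv f) y - 3 * (f y)^2 * deriv (deriv f) y - 6 * f y * (deriv f y)^2 + 18 * (f y)^3 * deriv f y) * g y) - 2 * (deriv (deriv (deriv (deriv f))) y + 5 * (deriv f y - (f y)^2) * deriv (deriv f) y - 5 * f y * (deriv f y)^2 + (f y)^5) * p1 y - 2 * f y * p2 y)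
    (e4 : ∀ y, deriv p1 y = f y * g y)
    (e5 : ∀ y, deriv p2 y = (deriv (deriv (deriv (deriv f))) y + 5 * (deriv f y - (f y)^2) * deriv (deriv f) y - 5 * f y * (deriv f y)^2 + (f y)^5) * g y)
    (x : ℝ) :
    deriv (fun y => ((((1)/(2)) * ((ww y) ^ 2)) - (κ * ((((((((g y) * (deriv (deriv (deriv (deriv g))) y)) - ((deriv g y) * (deriv (deriv (deriv g)) y))) + (((1)/(2)) * ((deriv (deriv g) y) ^ 2))) + ((3) * (deriv (deriv (fun z => (deriv f z - f z ^ 2) * g z ^ 2)) y))) - (((9) * (deriv (fun z => (deriv f z - f z ^ 2) * g z) y)) * (deriv g y))) - (((((((2) * (deriv (deriv (deriv f)) y)) + (((2) * (f y)) * (deriv (deriv f) y))) - (((5)/(2)) * ((deriv f y) ^ 2))) + (((3) * ((f y) ^ 2)) * (deriv f y))) - (((9)/(2)) * ((f y) ^ 4))) * ((g y) ^ 2))) - (((2) * (p1 y)) * (p2 y)))))) x = 0 := by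
  have sf1 : ContDiff ℝ ∞ (deriv f) := (contDiff_infty_iff_deriv.mp hf).2
  have sf2 : ContDiff ℝ ∞ (deriv (deriv f)) := (contDiff_infty_iff_deriv.mp sf1).2
  have sf3 : ContDiff ℝ ∞ (deriv (deriv (deriv f))) := (contDiff_infty_iff_deriv.mp sf2).2
  have sg1 : ContDiff ℝ ∞ (deriv g) := (contDiff_infty_iff_deriv.mp hg).2
  have sg2 : ContDiff ℝ ∞ (deriv (deriv g)) := (contDiff_infty_iff_deriv.mp sg1).2
  have sg3 : ContDiff ℝ ∞ (deriv (deriv (deriv g))) := (contDiff_infty_iff_deriv.mp sg2).2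
  have sg4 : ContDiff ℝ ∞ (deriv (deriv (deriv (deriv g)))) := (contDiff_infty_iff_deriv.mp sg3).2
  have HF0 : ∀ y, HasDerivAt f (deriv f y) y := fun y => (hf.differentiable (by norm_num) y).hasDerivAt
  have HF1 : ∀ y, HasDerivAt (deriv f) (deriv (deriv f) y) y := fun y => (sf1.differentiable (by norm_num) y).hasDerivAt
  have HF2 : ∀ y, HasDerivAt (deriv (deriv f)) (deriv (deriv (deriv f)) y) y := fun y => (sf2.differentiable (by norm_num) y).hasDerivAt
  have HF3 : ∀ y, HasDerivAt (deriv (deriv (deriv f))) (deriv (deriv (deriv (deriv f))) y) y := fun y => (sf3.differentiable (by norm_num) y).hasDerivAt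
  have HG0 : ∀ y, HasDerivAt g (deriv g y) y := fun y => (hg.differentiable (by norm_num) y).hasDerivAt
  have HG1 : ∀ y, HasDerivAt (deriv g) (deriv (deriv g) y) y := fun y => (sg1.differentiable (by norm_num) y).hasDerivAt
  have HG2 : ∀ y, HasDerivAt (deriv (deriv g)) (deriv (deriv (deriv g)) y) y := fun y => (sg2.differentiable (by norm_num) y).hasDerivAt
  have HG3 : ∀ y, HasDerivAt (deriv (deriv (deriv g))) (deriv (deriv (deriv (deriv g))) y) y := fun y => (sg3.differentiable (by norm_num) y).hasDerivAt
  have HG4 : ∀ y, HasDerivAt (deriv (deriv (deriv (deriv g)))) (deriv (deriv (deriv (deriv (deriv g)))) y) y := fun y => (sg4.differentiable (by norm_num) y).hasDerivAt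
  have HW : ∀ y, HasDerivAt ww (κ * g y) y := fun y => e2 y ▸ (hww.differentiable (by norm_num) y).hasDerivAt
  have HP1 : ∀ y, HasDerivAt p1 (f y * g y) y := fun y => e4 y ▸ (hp1.differentiable (by norm_num) y).hasDerivAt
  have HP2 : ∀ y, HasDerivAt p2 ((deriv (deriv (deriv (deriv f))) y + 5 * (deriv f y - (f y)^2) * deriv (deriv f) y - 5 * f y * (deriv f y)^2 + (f y)^5) * g y) y := fun y => e5 y ▸ (hp2.differentiable (by norm_num) y).hasDerivAt
  have Hq : ∀ y, HasDerivAt (fun z => (((deriv f z) - ((f z) ^ 2)) * ((g z) ^ 2))) ((((((-2) * (((f y) * (deriv f y)) * ((g y) ^ 2))) + ((-2) * ((((f y) ^ 2) * (g y)) * (deriv g y)))) + ((2) * (((deriv f y) * (g y)) * (deriv g y)))) + ((1) * ((deriv (deriv f) y) * ((g y) ^ 2))))) y := by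
    intro y
    have H := (HasDerivAt.fun_mul (HasDerivAt.fun_sub (HF1 y) (HasDerivAt.fun_pow (n := 2) (HF0 y))) (HasDerivAt.fun_pow (n := 2) (HG0 y)))
    refine H.congr_deriv ?_
    all_goals push_cast; ring
  have hq1' : deriv (fun z => (((deriv f z) - ((f z) ^ 2)) * ((g z) ^ 2))) = (fun y => (((((-2) * (((f y) * (deriv f y)) * ((g y) ^ 2))) + ((-2) * ((((f y) ^ 2) * (g y)) * (deriv g y)))) + ((2) * (((deriv f y) * (g y)) * (deriv g y)))) + ((1) * ((deriv (deriv f) y) * ((g y) ^ 2))))) := funext fun y => (Hq y).deriv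
  have HQ1 : ∀ y, HasDerivAt (fun z => (((((-2) * (((f z) * (deriv f z)) * ((g z) ^ 2))) + ((-2) * ((((f z) ^ 2) * (g z)) * (deriv g z)))) + ((2) * (((deriv f z) * (g z)) * (deriv g z)))) + ((1) * ((deriv (deriv f) z) * ((g z) ^ 2))))) (((((((((((-8) * ((((f y) * (deriv f y)) * (g y)) * (deriv g y))) + ((-2) * (((f y) * (deriv (deriv f) y)) * ((g y) ^ 2)))) + ((-2) * ((((f y) ^ 2) * (g y)) * (deriv (deriv g) y)))) + ((-2) * (((f y) ^ 2) * ((deriv g y) ^ 2)))) + ((2) * (((deriv f y) * (g y)) * (deriv (deriv g) y)))) + ((2) * ((deriv f y) * ((deriv g y) ^ 2)))) + ((-2) * (((deriv f y) ^ 2) * ((g y) ^ 2)))) + ((4) * (((deriv (deriv f) y) * (g y)) * (deriv g y)))) + ((1) * ((deriv (deriv (deriv f)) y) * ((g y) ^ 2))))) y := by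
    intro y
    have H := (HasDerivAt.fun_add (HasDerivAt.fun_add (HasDerivAt.fun_add (HasDerivAt.const_mul ((-2) : ℝ) (HasDerivAt.fun_mul (HasDerivAt.fun_mul (HF0 y) (HF1 y)) (HasDerivAt.fun_pow (n := 2) (HG0 y)))) (HasDerivAt.const_mul ((-2) : ℝ) (HasDerivAt.fun_mul (HasDerivAt.fun_mul (HasDerivAt.fun_pow (n := 2) (HF0 y)) (HG0 y)) (HG1 y)))) (HasDerivAt.const_mul ((2) : ℝ) (HasDerivAt.fun_mul (HasDerivAt.fun_mul (HF1 y) (HG0 y)) (HG1 y)))) (HasDerivAt.const_mul ((1) : ℝ) (HasDerivAt.fun_mul (HF2 y) (HasDerivAt.fun_pow (n := 2) (HG0 y)))))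
    refine H.congr_deriv ?_
    all_goals push_cast; ring
  have hq2' : deriv (deriv (fun z => (((deriv f z) - ((f z) ^ 2)) * ((g z) ^ 2)))) = (fun y => ((((((((((-8) * ((((f y) * (deriv f y)) * (g y)) * (deriv g y))) + ((-2) * (((f y) * (deriv (deriv f) y)) * ((g y) ^ 2)))) + ((-2) * ((((f y) ^ 2) * (g y)) * (deriv (deriv g) y)))) + ((-2) * (((f y) ^ 2) * ((deriv g y) ^ 2)))) + ((2) * (((deriv f y) * (g y)) * (deriv (deriv g) y)))) + ((2) * ((deriv f y) * ((deriv g y) ^ 2)))) + ((-2) * (((deriv f y) ^ 2) * ((g y) ^ 2)))) + ((4) * (((deriv (deriv f) y) * (g y)) * (deriv g y)))) + ((1) * ((deriv (deriv (deriv f)) y) * ((g y) ^ 2))))) := by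
    rw [hq1']; exact funext fun y => (HQ1 y).deriv
  have HQ2 : ∀ y, HasDerivAt (fun z => ((((((((((-8) * ((((f z) * (deriv f z)) * (g z)) * (deriv g z))) + ((-2) * (((f z) * (deriv (deriv f) z)) * ((g z) ^ 2)))) + ((-2) * ((((f z) ^ 2) * (g z)) * (deriv (deriv g) z)))) + ((-2) * (((f z) ^ 2) * ((deriv g z) ^ 2)))) + ((2) * (((deriv f z) * (g z)) * (deriv (deriv g) z)))) + ((2) * ((deriv f z) * ((deriv g z) ^ 2)))) + ((-2) * (((deriv f z) ^ 2) * ((g z) ^ 2)))) + ((4) * (((deriv (deriv f) z) * (g z)) * (deriv g z)))) + ((1) * ((deriv (deriv (deriv f)) z) * ((g z) ^ 2))))) ((((((((((((((((-12) * ((((f y) * (deriv f y)) * (g y)) * (deriv (deriv g) y))) + ((-12) * (((f y) * (deriv f y)) * ((deriv g y) ^ 2)))) + ((-12) * ((((f y) * (deriv (deriv f) y)) * (g y)) * (deriv g y)))) + ((-2) * (((f y) * (deriv (deriv (deriv f)) y)) * ((g y) ^ 2)))) + ((-2) * ((((f y) ^ 2) * (g y)) * (deriv (deriv (deriv g)) y))))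 + ((-6) * ((((f y) ^ 2) * (deriv g y)) * (deriv (deriv g) y)))) + ((-6) * (((deriv f y) * (deriv (deriv f) y)) * ((g y) ^ 2)))) + ((2) * (((deriv f y) * (g y)) * (deriv (deriv (deriv g)) y)))) + ((6) * (((deriv f y) * (deriv g y)) * (deriv (deriv g) y)))) + ((-12) * ((((deriv f y) ^ 2) * (g y)) * (deriv g y)))) + ((6) * (((deriv (deriv f) y) * (g y)) * (deriv (deriv g) y)))) + ((6) * ((deriv (deriv f) y) * ((deriv g y) ^ 2)))) + ((6) * (((deriv (deriv (deriv f)) y) * (g y)) * (deriv g y)))) + ((1) * ((deriv (deriv (deriv (deriv f))) y) * ((g y) ^ 2))))) y := by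
    intro y
    have H := (HasDerivAt.fun_add (HasDerivAt.fun_add (HasDerivAt.fun_add (HasDerivAt.fun_add (HasDerivAt.fun_add (HasDerivAt.fun_add (HasDerivAt.fun_add (HasDerivAt.fun_add (HasDerivAt.const_mul ((-8) : ℝ) (HasDerivAt.fun_mul (HasDerivAt.fun_mul (HasDerivAt.fun_mul (HF0 y) (HF1 y)) (HG0 y)) (HG1 y))) (HasDerivAt.const_mul ((-2) : ℝ) (HasDerivAt.fun_mul (HasDerivAt.fun_mul (HF0 y) (HF2 y)) (HasDerivAt.fun_pow (n := 2) (HG0 y))))) (HasDerivAt.const_mul ((-2) : ℝ) (HasDerivAt.fun_mul (HasDerivAt.fun_mul (HasDerivAt.fun_pow (n := 2) (HF0 y)) (HG0 y)) (HG2 y)))) (HasDerivAt.const_mul ((-2) : ℝ) (HasDerivAt.fun_mul (HasDerivAt.fun_pow (n := 2) (HF0 y)) (HasDerivAt.fun_pow (n := 2) (HG1 y))))) (HasDerivAt.const_mul ((2) : ℝ) (HasDerivAt.fun_mul (HasDerivAt.fun_mul (HF1 y) (HG0 y)) (HG2 y)))) (HasDerivAt.const_mul ((2) : ℝ) (HasDerivAt.fun_mul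 (HF1 y) (HasDerivAt.fun_pow (n := 2) (HG1 y))))) (HasDerivAt.const_mul ((-2) : ℝ) (HasDerivAt.fun_mul (HasDerivAt.fun_pow (n := 2) (HF1 y)) (HasDerivAt.fun_pow (n := 2) (HG0 y))))) (HasDerivAt.const_mul ((4) : ℝ) (HasDerivAt.fun_mul (HasDerivAt.fun_mul (HF2 y) (HG0 y)) (HG1 y)))) (HasDerivAt.const_mul ((1) : ℝ) (HasDerivAt.fun_mul (HF3 y) (HasDerivAt.fun_pow (n := 2) (HG0 y)))))
    refine H.congr_deriv ?_
    all_goals push_cast; ring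
  have HT2 : ∀ y, HasDerivAt (deriv (deriv (fun z => (((deriv f z) - ((f z) ^ 2)) * ((g z) ^ 2))))) ((((((((((((((((-12) * ((((f y) * (deriv f y)) * (g y)) * (deriv (deriv g) y))) + ((-12) * (((f y) * (deriv f y)) * ((deriv g y) ^ 2)))) + ((-12) * ((((f y) * (deriv (deriv f) y)) * (g y)) * (deriv g y)))) + ((-2) * (((f y) * (deriv (deriv (deriv f)) y)) * ((g y) ^ 2)))) + ((-2) * ((((f y) ^ 2) * (g y)) * (deriv (deriv (deriv g)) y)))) + ((-6) * ((((f y) ^ 2) * (deriv g y)) * (deriv (deriv g) y)))) + ((-6) * (((deriv f y) * (deriv (deriv f) y)) * ((g y) ^ 2)))) + ((2) * (((deriv f y) * (g y)) * (deriv (deriv (deriv g)) y)))) + ((6) * (((deriv f y) * (deriv g y)) * (deriv (deriv g) y)))) + ((-12) * ((((deriv f y) ^ 2) * (g y)) * (deriv g y)))) + ((6) * (((deriv (deriv f) y) * (g y)) * (deriv (deriv g) y)))) + ((6) * ((deriv (deriv f) y) * ((deriv g y) ^ 2)))) + ((6) * (((deriv (deriv (deriv f)) y) * (g y)) * (deriv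 g y)))) + ((1) * ((deriv (deriv (deriv (deriv f))) y) * ((g y) ^ 2))))) y := by
    intro y; rw [hq2']; exact HQ2 y
  have Hr : ∀ y, HasDerivAt (fun z => (((deriv f z) - ((f z) ^ 2)) * (g z))) ((((((-2) * (((f y) * (deriv f y)) * (g y))) + ((-1) * (((f y) ^ 2) * (deriv g y)))) + ((1) * ((deriv f y) * (deriv g y)))) + ((1) * ((deriv (deriv f) y) * (g y))))) y := by
    intro y
    have H := (HasDerivAt.fun_mul (HasDerivAt.fun_sub (HF1 y) (HasDerivAt.fun_pow (n := 2) (HF0 y))) (HG0 y))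
    refine H.congr_deriv ?_
    all_goals push_cast; ring
  have hr1' : deriv (fun z => (((deriv f z) - ((f z) ^ 2)) * (g z))) = (fun y => (((((-2) * (((f y) * (deriv f y)) * (g y))) + ((-1) * (((f y) ^ 2) * (deriv g y)))) + ((1) * ((deriv f y) * (deriv g y)))) + ((1) * ((deriv (deriv f) y) * (g y))))) := funext fun y => (Hr y).deriv
  have hr1p : ∀ y, deriv (fun z => (((deriv f z) - ((f z) ^ 2)) * (g z))) y = (((((-2) * (((f y) * (deriv f y)) * (g y))) + ((-1) * (((f y) ^ 2) * (deriv g y)))) + ((1) * ((deriv f y) * (deriv g y)))) + ((1) * ((deriv (deriv f) y) * (g y)))) := fun y => (Hr y).deriv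
  have HR1 : ∀ y, HasDerivAt (fun z => (((((-2) * (((f z) * (deriv f z)) * (g z))) + ((-1) * (((f z) ^ 2) * (deriv g z)))) + ((1) * ((deriv f z) * (deriv g z)))) + ((1) * ((deriv (deriv f) z) * (g z))))) (((((((((-4) * (((f y) * (deriv f y)) * (deriv g y))) + ((-2) * (((f y) * (deriv (deriv f) y)) * (g y)))) + ((-1) * (((f y) ^ 2) * (deriv (deriv g) y)))) + ((1) * ((deriv f y) * (deriv (deriv g) y)))) + ((-2) * (((deriv f y) ^ 2) * (g y)))) + ((2) * ((deriv (deriv f) y) * (deriv g y)))) + ((1) * ((deriv (deriv (deriv f)) y) * (g y))))) y := by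
    intro y
    have H := (HasDerivAt.fun_add (HasDerivAt.fun_add (HasDerivAt.fun_add (HasDerivAt.const_mul ((-2) : ℝ) (HasDerivAt.fun_mul (HasDerivAt.fun_mul (HF0 y) (HF1 y)) (HG0 y))) (HasDerivAt.const_mul ((-1) : ℝ) (HasDerivAt.fun_mul (HasDerivAt.fun_pow (n := 2) (HF0 y)) (HG1 y)))) (HasDerivAt.const_mul ((1) : ℝ) (HasDerivAt.fun_mul (HF1 y) (HG1 y)))) (HasDerivAt.const_mul ((1) : ℝ) (HasDerivAt.fun_mul (HF2 y) (HG0 y))))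
    refine H.congr_deriv ?_
    all_goals push_cast; ring
  have HT1 : ∀ y, HasDerivAt (deriv (fun z => (((deriv f z) - ((f z) ^ 2)) * (g z)))) (((((((((-4) * (((f y) * (deriv f y)) * (deriv g y))) + ((-2) * (((f y) * (deriv (deriv f) y)) * (g y)))) + ((-1) * (((f y) ^ 2) * (deriv (deriv g) y)))) + ((1) * ((deriv f y) * (deriv (deriv g) y)))) + ((-2) * (((deriv f y) ^ 2) * (g y)))) + ((2) * ((deriv (deriv f) y) * (deriv g y)))) + ((1) * ((deriv (deriv (deriv f)) y) * (g y))))) y := by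
    intro y; rw [hr1']; exact HR1 y
  have HB : HasDerivAt (fun y => ((((1)/(2)) * ((ww y) ^ 2)) - (κ * ((((((((g y) * (deriv (deriv (deriv (deriv g))) y)) - ((deriv g y) * (deriv (deriv (deriv g)) y))) + (((1)/(2)) * ((deriv (deriv g) y) ^ 2))) + ((3) * (deriv (deriv (fun z => (deriv f z - f z ^ 2) * g z ^ 2)) y))) - (((9) * (deriv (fun z => (deriv f z - f z ^ 2) * g z) y)) * (deriv g y))) - (((((((2) * (deriv (deriv (deriv f)) y)) + (((2) * (f y)) * (deriv (deriv f) y))) - (((5)/(2)) * ((deriv f y) ^ 2))) + (((3) * ((f y) ^ 2)) * (deriv f y))) - (((9)/(2)) * ((f y) ^ 4))) * ((g y) ^ 2))) - (((2) * (p1 y)) * (p2 y)))))) ((((((((((((((((((((((((((((9) * (((deriv (fun z => (deriv f z - f z ^ 2) * g z) x) * (deriv (deriv g) x)) * (κ))) + ((36) * (((((f x) * (deriv f x)) * (g x)) * (deriv (deriv g) x)) * (κ)))) + ((-10) * (((((f x) * ((deriv f x) ^ 2)) * (g x)) * (κ)) * (p1 x)))) + ((6) * ((((f x) * ((deriv f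 x) ^ 2)) * ((g x) ^ 2)) * (κ)))) + ((22) * (((((f x) * (deriv (deriv f) x)) * (g x)) * (deriv g x)) * (κ)))) + ((8) * ((((f x) * (deriv (deriv (deriv f)) x)) * ((g x) ^ 2)) * (κ)))) + ((2) * ((((f x) * (g x)) * (κ)) * (p2 x)))) + ((6) * ((((((f x) ^ 2) * (deriv f x)) * (g x)) * (deriv g x)) * (κ)))) + ((-10) * ((((((f x) ^ 2) * (deriv (deriv f) x)) * (g x)) * (κ)) * (p1 x)))) + ((3) * (((((f x) ^ 2) * (deriv (deriv f) x)) * ((g x) ^ 2)) * (κ)))) + ((6) * (((((f x) ^ 2) * (g x)) * (deriv (deriv (deriv g)) x)) * (κ)))) + ((9) * (((((f x) ^ 2) * (deriv g x)) * (deriv (deriv g) x)) * (κ)))) + ((-18) * (((((f x) ^ 3) * (deriv f x)) * ((g x) ^ 2)) * (κ)))) + ((-9) * (((((f x) ^ 4) * (g x)) * (deriv g x)) * (κ)))) + ((2) * (((((f x) ^ 5) * (g x)) * (κ)) * (p1 x)))) + ((10) * (((((deriv f x) * (deriv (deriv f) x)) * (g x)) * (κ)) * (p1 x)))) + ((15)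 * ((((deriv f x) * (deriv (deriv f) x)) * ((g x) ^ 2)) * (κ)))) + ((-6) * ((((deriv f x) * (g x)) * (deriv (deriv (deriv g)) x)) * (κ)))) + ((-9) * ((((deriv f x) * (deriv g x)) * (deriv (deriv g) x)) * (κ)))) + ((13) * (((((deriv f x) ^ 2) * (g x)) * (deriv g x)) * (κ)))) + ((-18) * ((((deriv (deriv f) x) * (g x)) * (deriv (deriv g) x)) * (κ)))) + ((-5) * ((((deriv (deriv (deriv f)) x) * (g x)) * (deriv g x)) * (κ)))) + ((2) * ((((deriv (deriv (deriv (deriv f))) x) * (g x)) * (κ)) * (p1 x)))) + ((-1) * (((deriv (deriv (deriv (deriv f))) x) * ((g x) ^ 2)) * (κ)))) + ((-1) * (((g x) * (deriv (deriv (deriv (deriv (deriv g)))) x)) * (κ)))) + ((1) * (((g x) * (κ)) * (ww x))))) x := by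
    have H := (HasDerivAt.fun_sub (HasDerivAt.const_mul (((1)/(2)) : ℝ) (HasDerivAt.fun_pow (n := 2) (HW x))) (HasDerivAt.const_mul κ (HasDerivAt.fun_sub (HasDerivAt.fun_sub (HasDerivAt.fun_sub (HasDerivAt.fun_add (HasDerivAt.fun_add (HasDerivAt.fun_sub (HasDerivAt.fun_mul (HG0 x) (HG4 x)) (HasDerivAt.fun_mul (HG1 x) (HG3 x))) (HasDerivAt.const_mul (((1)/(2)) : ℝ) (HasDerivAt.fun_pow (n := 2) (HG2 x)))) (HasDerivAt.const_mul ((3) : ℝ) (HT2 x))) (HasDerivAt.fun_mul (HasDerivAt.const_mul ((9) : ℝ) (HT1 x)) (HG1 x))) (HasDerivAt.fun_mul (HasDerivAt.fun_sub (HasDerivAt.fun_add (HasDerivAt.fun_sub (HasDerivAt.fun_add (HasDerivAt.const_mul ((2) : ℝ) (HF3 x)) (HasDerivAt.fun_mul (HasDerivAt.const_mul ((2) : ℝ) (HF0 x)) (HF2 x))) (HasDerivAt.const_mul (((5)/(2)) : ℝ) (HasDerivAt.fun_pow (n := 2) (HF1 x)))) (HasDerivAt.fun_mul (HasDerivAt.const_mul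 ((3) : ℝ) (HasDerivAt.fun_pow (n := 2) (HF0 x))) (HF1 x))) (HasDerivAt.const_mul (((9)/(2)) : ℝ) (HasDerivAt.fun_pow (n := 4) (HF0 x)))) (HasDerivAt.fun_pow (n := 2) (HG0 x)))) (HasDerivAt.fun_mul (HasDerivAt.const_mul ((2) : ℝ) (HP1 x)) (HP2 x)))))
    refine H.congr_deriv ?_
    all_goals push_cast; ring
  have hz : ((((((((((((((((((((((((((((9) * (((deriv (fun z => (deriv f z - f z ^ 2) * g z) x) * (deriv (deriv g) x)) * (κ))) + ((36) * (((((f x) * (deriv f x)) * (g x)) * (deriv (deriv g) x)) * (κ)))) + ((-10) * (((((f x) * ((deriv f x) ^ 2)) * (g x)) * (κ)) * (p1 x)))) + ((6) * ((((f x) * ((deriv f x) ^ 2)) * ((g x) ^ 2)) * (κ)))) + ((22) * (((((f x) * (deriv (deriv f) x)) * (g x)) * (deriv g x)) * (κ)))) + ((8) * ((((f x) * (deriv (deriv (deriv f)) x)) * ((g x) ^ 2)) * (κ)))) + ((2) * ((((f x) * (g x)) * (κ)) * (p2 x)))) + ((6) * ((((((f x) ^ 2) * (deriv f x)) * (g x))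 * (deriv g x)) * (κ)))) + ((-10) * ((((((f x) ^ 2) * (deriv (deriv f) x)) * (g x)) * (κ)) * (p1 x)))) + ((3) * (((((f x) ^ 2) * (deriv (deriv f) x)) * ((g x) ^ 2)) * (κ)))) + ((6) * (((((f x) ^ 2) * (g x)) * (deriv (deriv (deriv g)) x)) * (κ)))) + ((9) * (((((f x) ^ 2) * (deriv g x)) * (deriv (deriv g) x)) * (κ)))) + ((-18) * (((((f x) ^ 3) * (deriv f x)) * ((g x) ^ 2)) * (κ)))) + ((-9) * (((((f x) ^ 4) * (g x)) * (deriv g x)) * (κ)))) + ((2) * (((((f x) ^ 5) * (g x)) * (κ)) * (p1 x)))) + ((10) * (((((deriv f x) * (deriv (deriv f) x)) * (g x)) * (κ)) * (p1 x)))) + ((15) * ((((deriv f x) * (deriv (deriv f) x)) * ((g x) ^ 2)) * (κ)))) + ((-6) * ((((deriv f x) * (g x)) * (deriv (deriv (deriv g)) x)) * (κ)))) + ((-9) * ((((deriv f x) * (deriv g x)) * (deriv (deriv g) x)) * (κ)))) + ((13) * (((((deriv f x) ^ 2) * (g x)) * (deriv g x)) * (κ)))) + ((-18) * ((((deriv (deriv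 f) x) * (g x)) * (deriv (deriv g) x)) * (κ)))) + ((-5) * ((((deriv (deriv (deriv f)) x) * (g x)) * (deriv g x)) * (κ)))) + ((2) * ((((deriv (deriv (deriv (deriv f))) x) * (g x)) * (κ)) * (p1 x)))) + ((-1) * (((deriv (deriv (deriv (deriv f))) x) * ((g x) ^ 2)) * (κ)))) + ((-1) * (((g x) * (deriv (deriv (deriv (deriv (deriv g)))) x)) * (κ)))) + ((1) * (((g x) * (κ)) * (ww x))))) = 0 := by
    rw [e3 x, hr1p x]; ring
  exact HB.deriv.trans hz

/-- First integral of the generalized Kupershmidt −1 flow system. -/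
theorem kup_gen_neg1_first_integral
    (κ : ℝ) (u h h1 h2 w : ℝ → ℝ → ℝ)
    (hu : Smooth2 u) (hh : Smooth2 h) (hh1 : Smooth2 h1) (hh2 : Smooth2 h2) (hw : Smooth2 w)
    (sys1 : ∀ t x, pt u t x = h t x)
    (sys2 : ∀ t x, px w t x = κ * h t x)
    (sys3 : ∀ t x, w t x = KupA u h t x - 2 * KupB u t x * h1 t x - 2 * u t x * h2 t x)
    (sys4 : ∀ t x, px h1 t x = u t x * h t x)
    (sys5 : ∀ t x, px h2 t x = KupB u t x * h t x) :
    ∀ t x, px (fun t x =>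
      (1/2) * (w t x)^2 - κ * (KupJ u h t x - 2 * h1 t x * h2 t x)) t x = 0 := by
  intro t x
  exact kup_key κ (fun y => u t y) (fun y => h t y) (fun y => h1 t y) (fun y => h2 t y)
    (fun y => w t y)
    ((hu.comp (contDiff_const.prodMk contDiff_id)).of_le (by simp))
    ((hh.comp (contDiff_const.prodMk contDiff_id)).of_le (by simp))
    ((hh1.comp (contDiff_const.prodMk contDiff_id)).of_le (by simp))
    ((hh2.comp (contDiff_const.prodMk contDiff_id)).of_le (by simp))
    ((hw.comp (contDiff_const.prodMk contDiff_id)).of_le (by simp))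
    (sys2 t) (sys3 t) (sys4 t) (sys5 t) x
end
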